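/- Let H be an inner product space, x_1,…,x_n ∈ H, and k ≥ 1 such that ‖x_i‖·‖x_j‖ ≤ k·Re⟨x_i, x_j⟩ for all 1 ≤ i < j ≤ n. Then ∑_{i=1}^n ‖x_i‖ ≤ √(nk/(n + k − 1)) · ‖∑_{i=1}^n x_i‖. -/

import Mathlib

/-!
With `S = ∑ ‖xᵢ‖` and `Q = ∑ ‖xᵢ‖²`, expanding `‖∑ xᵢ‖² = ∑ᵢ ∑ⱼ Re⟪xᵢ, xⱼ⟫` and applying the
hypothesis off the diagonal gives `S² + (k - 1) Q ≤ k ‖∑ xᵢ‖²`. Since `k ≥ 1`, the Cauchy–Schwarz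
bound `S² ≤ n Q` eliminates `Q`, leaving `(n + k - 1) S² ≤ n k ‖∑ xᵢ‖²`.
-/

open Finset RCLike

section
variable {𝕜 H ι : Type*} [RCLike 𝕜] [NormedAddCommGroup H] [InnerProductSpace 𝕜 H]

theorem norm_sum_sq_eq_sum_sum_re_inner (s : Finset ι) (x : ι → H) :
    ‖∑ i ∈ s, x i‖ ^ 2 = ∑ i ∈ s, ∑ j ∈ s, re (inner 𝕜 (x i) (x j)) := by
  rw [← @inner_self_eq_norm_sq 𝕜, sum_inner, map_sum]
  simp only [inner_sum, map_sum]

theorem sq_sum_norm_add_le_mul_norm_sum_sq [DecidableEq ι] (s : Finset ι) (x : ι → H) (k : ℝ)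
    (h : ∀ i ∈ s, ∀ j ∈ s, i ≠ j → ‖x i‖ * ‖x j‖ ≤ k * re (inner 𝕜 (x i) (x j))) :
    (∑ i ∈ s, ‖x i‖) ^ 2 + (k - 1) * ∑ i ∈ s, ‖x i‖ ^ 2 ≤ k * ‖∑ i ∈ s, x i‖ ^ 2 := by
  have hterm : ∀ i ∈ s, ∀ j ∈ s,
      ‖x i‖ * ‖x j‖ + (if i = j then (k - 1) * ‖x i‖ ^ 2 else 0) ≤
        k * re (inner 𝕜 (x i) (x j)) := by
    intro i hi j hj
    by_cases hij : i = j
    · subst hij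
      rw [if_pos rfl, inner_self_eq_norm_sq]
      linarith
    · simpa [hij] using h i hi j hj hij
  calc (∑ i ∈ s, ‖x i‖) ^ 2 + (k - 1) * ∑ i ∈ s, ‖x i‖ ^ 2
      = ∑ i ∈ s, ∑ j ∈ s,
          (‖x i‖ * ‖x j‖ + (if i = j then (k - 1) * ‖x i‖ ^ 2 else 0)) := by
        simp_rw [sum_add_distrib, sum_ite_eq, sq, sum_mul_sum, mul_sum]
        simp
    _ ≤ ∑ i ∈ s, ∑ j ∈ s, k * re (inner 𝕜 (x i) (x j)) :=
        sum_le_sum fun i hi ↦ sum_le_sum fun j hj ↦ hterm i hi j hj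
    _ = k * ‖∑ i ∈ s, x i‖ ^ 2 := by
        rw [norm_sum_sq_eq_sum_sum_re_inner (𝕜 := 𝕜), mul_sum]
        simp only [mul_sum]

theorem sum_norm_le_sqrt_mul_norm_sum [DecidableEq ι] (s : Finset ι) (x : ι → H) {k : ℝ}
    (hk : 1 ≤ k)
    (h : ∀ i ∈ s, ∀ j ∈ s, i ≠ j → ‖x i‖ * ‖x j‖ ≤ k * re (inner 𝕜 (x i) (x j))) :
    ∑ i ∈ s, ‖x i‖ ≤ √(#s * k / (#s + k - 1)) * ‖∑ i ∈ s, x i‖ := by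
  rcases s.eq_empty_or_nonempty with rfl | hs
  · simp
  have hm : (0 : ℝ) < #s + k - 1 := by
    have : (1 : ℝ) ≤ #s := by exact_mod_cast hs.card_pos
    linarith
  have hcs := sq_sum_le_card_mul_sum_sq (s := s) (f := fun i ↦ ‖x i‖)
  have hkey := sq_sum_norm_add_le_mul_norm_sum_sq s x k h
  have hsq : (∑ i ∈ s, ‖x i‖) ^ 2 ≤ #s * k / (#s + k - 1) * ‖∑ i ∈ s, x i‖ ^ 2 := by
    rw [div_mul_eq_mul_div, le_div_iff₀ hm]
    -- `hkey` scaled by `#s`, plus `hcs` scaled by `k - 1 ≥ 0`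
    nlinarith
  rw [← Real.sqrt_sq (norm_nonneg (∑ i ∈ s, x i)), ← Real.sqrt_mul' _ (by positivity)]
  exact Real.le_sqrt_of_sq_le hsq

end

theorem stmt_17_general {𝕜 H : Type*} [RCLike 𝕜] [NormedAddCommGroup H] [InnerProductSpace 𝕜 H]
    (n : ℕ) (x : ℕ → H) (k : ℝ) (hk : 1 ≤ k)
    (h : ∀ i ∈ Finset.Icc 1 n, ∀ j ∈ Finset.Icc 1 n, i < j →
      ‖x i‖ * ‖x j‖ ≤ k * RCLike.re (inner 𝕜 (x i) (x j) : 𝕜)) :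
    ∑ i ∈ Finset.Icc 1 n, ‖x i‖ ≤
      Real.sqrt ((n * k) / ((n : ℝ) + k - 1)) * ‖∑ i ∈ Finset.Icc 1 n, x i‖ := by
  have hsymm : ∀ i ∈ Icc 1 n, ∀ j ∈ Icc 1 n, i ≠ j →
      ‖x i‖ * ‖x j‖ ≤ k * re (inner 𝕜 (x i) (x j)) := by
    intro i hi j hj hij
    rcases hij.lt_or_gt with hlt | hgt
    · exact h i hi j hj hlt
    · rw [mul_comm, inner_re_symm]
      exact h j hj i hi hgt
  simpa using sum_norm_le_sqrt_mul_norm_sum (Icc 1 n) x hk hsymm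

theorem stmt_17 {𝕜 H : Type*} [RCLike 𝕜] [NormedAddCommGroup H] [InnerProductSpace 𝕜 H]
    (n : ℕ) (hn : 1 ≤ n) (x : ℕ → H) (k : ℝ) (hk : 1 ≤ k)
    (h : ∀ i ∈ Finset.Icc 1 n, ∀ j ∈ Finset.Icc 1 n, i < j →
      ‖x i‖ * ‖x j‖ ≤ k * RCLike.re (inner 𝕜 (x i) (x j) : 𝕜)) :
    ∑ i ∈ Finset.Icc 1 n, ‖x i‖ ≤
      Real.sqrt ((n * k) / ((n : ℝ) + k - 1)) * ‖∑ i ∈ Finset.Icc 1 n, x i‖ :=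
  stmt_17_general n x k hk h
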